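/- Under the same eigenfunction assumptions (Lψ = −λψ, L*φ = −λφ with ψ, φ > 0), define Φ := −log φ and the operator L_Z f := β·Df − Df·aDΦ + (1/2) tr[a D²f], where β_i = −b_i + Σ_j ∂(a_{ij})/∂x_j. Then L_Z*(φψ)(x) = 0 for all x ∈ G, i.e., φψ is also a stationary density for L_Z. -/

import Mathlib

open Matrix

/-- Partial derivative `∂f/∂x_i` of `f : ℝ^d → ℝ`. -/
noncomputable def pd {d : ℕ} (f : (Fin d → ℝ) → ℝ) (i : Fin d) (x : Fin d → ℝ) : ℝ :=
  fderiv ℝ f x (Pi.single i 1)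

/-- Gradient of `f : ℝ^d → ℝ`. -/
noncomputable def grad {d : ℕ} (f : (Fin d → ℝ) → ℝ) (x : Fin d → ℝ) : Fin d → ℝ :=
  fun i => pd f i x

/-- Second partial derivative `∂²f/∂x_i∂x_j`. -/
noncomputable def pd2 {d : ℕ} (f : (Fin d → ℝ) → ℝ) (i j : Fin d) (x : Fin d → ℝ) : ℝ :=
  pd (pd f j) i x

/-- Hessian matrix of `f : ℝ^d → ℝ`. -/
noncomputable def hess {d : ℕ} (f : (Fin d → ℝ) → ℝ) (x : Fin d → ℝ) :
    Matrix (Fin d) (Fin d) ℝ :=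
  Matrix.of fun i j => pd2 f i j x


/-- The drift `β` of the formal adjoint `L*`: `β_i = −b_i + Σ_j ∂_j a_{ij}`. -/
noncomputable def betaOf {d : ℕ} (a : (Fin d → ℝ) → Matrix (Fin d) (Fin d) ℝ)
    (b : (Fin d → ℝ) → (Fin d → ℝ)) (x : Fin d → ℝ) : Fin d → ℝ :=
  fun i => -(b x i) + ∑ j, pd (fun y => a y i j) j x

/-- The zeroth order coefficient of `L*`:
`c = −(1/2)Σ_{i,j} ∂_i∂_j a_{ij} + Σ_i ∂_i b_i`. -/
noncomputable def cOf {d : ℕ} (a : (Fin d → ℝ) → Matrix (Fin d) (Fin d) ℝ)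
    (b : (Fin d → ℝ) → (Fin d → ℝ)) (x : Fin d → ℝ) : ℝ :=
  -(1 / 2) * ∑ i, ∑ j, pd2 (fun y => a y i j) i j x + ∑ i, pd (fun y => b y i) i x

/-- The drift of the operator `L_Z f = β·Df − Df·aDΦ + (1/2)tr[a D²f]`, i.e. `β − aDΦ`. -/
noncomputable def driftZ {d : ℕ} (a : (Fin d → ℝ) → Matrix (Fin d) (Fin d) ℝ)
    (b : (Fin d → ℝ) → (Fin d → ℝ)) (Φ : (Fin d → ℝ) → ℝ) (x : Fin d → ℝ) : Fin d → ℝ :=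
  fun i => betaOf a b x i - (a x).mulVec (grad Φ x) i

/-!
`L_Z` is the Doob transform of `L*` by `φ`: `L_Z f = φ⁻¹ (L* + λ)(φ f)`, so dually one expects
`L_Z* g = φ (L + λ)(g / φ)`. Pointwise this becomes the identity `L_Z*(φψ) = φ Lψ − ψ L*φ`, which
holds for every nonvanishing `φ` and symmetric `a`: expanding `D(φψ)`, `D²(φψ)` and
`div(aDφ/φ) = (div a·Dφ + tr(a D²φ))/φ − Dφ·aDφ/φ²`, everything cancels except
`−aDφ·Dψ + Dφ·aDψ`, which vanishes by symmetry of `a`. The eigen-equations then give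
`φ(−λψ) − ψ(−λφ) = 0`.
-/

open Filter Topology

section PartialDerivatives

variable {d : ℕ} {f g : (Fin d → ℝ) → ℝ} {x : Fin d → ℝ}

lemma pd_congr (h : f =ᶠ[𝓝 x] g) (i : Fin d) : pd f i x = pd g i x := by
  rw [pd, pd, h.fderiv_eq]

lemma pd_add (hf : DifferentiableAt ℝ f x) (hg : DifferentiableAt ℝ g x) (i : Fin d) :
    pd (fun y => f y + g y) i x = pd f i x + pd g i x := by
  simp [pd, fderiv_fun_add hf hg]

lemma pd_neg (i : Fin d) : pd (fun y => -f y) i x = -pd f i x := by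
  simp [pd, fderiv_fun_neg]

lemma pd_mul (hf : DifferentiableAt ℝ f x) (hg : DifferentiableAt ℝ g x) (i : Fin d) :
    pd (fun y => f y * g y) i x = pd f i x * g x + f x * pd g i x := by
  simp only [pd, fderiv_fun_mul hf hg, _root_.add_apply, _root_.smul_apply, smul_eq_mul]
  ring

lemma pd_sum {ι : Type*} (s : Finset ι) {F : ι → (Fin d → ℝ) → ℝ}
    (hF : ∀ k ∈ s, DifferentiableAt ℝ (F k) x) (i : Fin d) :
    pd (fun y => ∑ k ∈ s, F k y) i x = ∑ k ∈ s, pd (F k) i x := by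
  simp [pd, fderiv_fun_sum hF]

lemma grad_mul (hf : DifferentiableAt ℝ f x) (hg : DifferentiableAt ℝ g x) :
    grad (fun y => f y * g y) x = g x • grad f x + f x • grad g x := by
  ext i
  simp only [grad, pd_mul hf hg, Pi.add_apply, Pi.smul_apply, smul_eq_mul]
  ring

lemma grad_inv (hf : DifferentiableAt ℝ f x) (h0 : f x ≠ 0) :
    grad (fun y => (f y)⁻¹) x = -(f x ^ 2)⁻¹ • grad f x := by
  have h : HasFDerivAt (fun y => (f y)⁻¹) (-(f x ^ 2)⁻¹ • fderiv ℝ f x) x :=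
    (hasDerivAt_inv h0).comp_hasFDerivAt x hf.hasFDerivAt
  ext i
  simp [grad, pd, h.fderiv]

lemma grad_neg_log (hf : DifferentiableAt ℝ f x) (h0 : f x ≠ 0) :
    grad (fun y => -Real.log (f y)) x = -(f x)⁻¹ • grad f x := by
  ext i
  simp [grad, pd, fderiv_fun_neg, (hf.hasFDerivAt.log h0).fderiv]

lemma differentiableAt_pd (hf : ContDiffAt ℝ 2 f x) (j : Fin d) :
    DifferentiableAt ℝ (pd f j) x :=
  ((hf.fderiv_right (m := 1) (by norm_num)).differentiableAt (by norm_num)).clm_apply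
    (differentiableAt_const _)

lemma hess_mul (hf : ContDiffAt ℝ 2 f x) (hg : ContDiffAt ℝ 2 g x) :
    hess (fun y => f y * g y) x = g x • hess f x + vecMulVec (grad g x) (grad f x)
      + vecMulVec (grad f x) (grad g x) + f x • hess g x := by
  ext i j
  have hpd : pd (fun y => f y * g y) j =ᶠ[𝓝 x] fun y => pd f j y * g y + f y * pd g j y := by
    filter_upwards [hf.eventually (by simp), hg.eventually (by simp)] with y hfy hgy
    exact pd_mul (hfy.differentiableAt (by simp)) (hgy.differentiableAt (by simp)) j
  have hf' := hf.differentiableAt (by simp)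
  have hg' := hg.differentiableAt (by simp)
  simp only [hess, pd2, of_apply, Matrix.add_apply, Matrix.smul_apply, vecMulVec_apply, grad,
    smul_eq_mul, pd_congr hpd]
  rw [pd_add ((differentiableAt_pd hf j).fun_mul hg') (hf'.fun_mul (differentiableAt_pd hg j)),
    pd_mul (differentiableAt_pd hf j) hg', pd_mul hf' (differentiableAt_pd hg j)]
  ring

end PartialDerivatives

section Divergence

variable {d : ℕ} {x : Fin d → ℝ}

noncomputable def divergence (V : (Fin d → ℝ) → Fin d → ℝ) (x : Fin d → ℝ) : ℝ :=
  ∑ i, pd (fun y => V y i) i x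

noncomputable def matrixDivergence (a : (Fin d → ℝ) → Matrix (Fin d) (Fin d) ℝ)
    (x : Fin d → ℝ) : Fin d → ℝ :=
  fun i => ∑ j, pd (fun y => a y i j) j x

lemma divergence_congr {V W : (Fin d → ℝ) → Fin d → ℝ} (h : V =ᶠ[𝓝 x] W) :
    divergence V x = divergence W x :=
  Finset.sum_congr rfl fun i _ => pd_congr (h.mono fun _ hy => congrFun hy i) i

lemma divergence_add {V W : (Fin d → ℝ) → Fin d → ℝ}
    (hV : ∀ i, DifferentiableAt ℝ (fun y => V y i) x)
    (hW : ∀ i, DifferentiableAt ℝ (fun y => W y i) x) :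
    divergence (fun y => V y + W y) x = divergence V x + divergence W x := by
  rw [divergence, divergence, divergence, ← Finset.sum_add_distrib]
  exact Finset.sum_congr rfl fun i _ => pd_add (hV i) (hW i) i

lemma divergence_smul {f : (Fin d → ℝ) → ℝ} {V : (Fin d → ℝ) → Fin d → ℝ}
    (hf : DifferentiableAt ℝ f x) (hV : ∀ i, DifferentiableAt ℝ (fun y => V y i) x) :
    divergence (fun y => f y • V y) x = grad f x ⬝ᵥ V x + f x * divergence V x := by
  rw [divergence, divergence, dotProduct, Finset.mul_sum, ← Finset.sum_add_distrib]
  exact Finset.sum_congr rfl fun i _ => pd_mul hf (hV i) i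

lemma divergence_betaOf {a : (Fin d → ℝ) → Matrix (Fin d) (Fin d) ℝ}
    {b : (Fin d → ℝ) → Fin d → ℝ} (ha : ∀ i j, ContDiffAt ℝ 2 (fun y => a y i j) x)
    (hb : ∀ i, DifferentiableAt ℝ (fun y => b y i) x) :
    divergence (betaOf a b) x = -divergence b x + ∑ i, ∑ j, pd2 (fun y => a y i j) i j x := by
  rw [divergence, divergence, ← Finset.sum_neg_distrib, ← Finset.sum_add_distrib]
  refine Finset.sum_congr rfl fun i _ => ?_
  have hrow : ∀ j ∈ Finset.univ, DifferentiableAt ℝ (pd (fun y => a y i j) j) x :=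
    fun j _ => differentiableAt_pd (ha i j) j
  simp only [betaOf]
  rw [pd_add (hb i).fun_neg (DifferentiableAt.fun_sum hrow), pd_neg, pd_sum _ hrow]
  rfl

lemma divergence_mulVec_grad {a : (Fin d → ℝ) → Matrix (Fin d) (Fin d) ℝ}
    {φ : (Fin d → ℝ) → ℝ} (hsym : ∀ y, (a y).IsSymm)
    (ha : ∀ i j, DifferentiableAt ℝ (fun y => a y i j) x) (hφ : ContDiffAt ℝ 2 φ x) :
    divergence (fun y => a y *ᵥ grad φ y) x
      = matrixDivergence a x ⬝ᵥ grad φ x + (a x * hess φ x).trace := by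
  have hswap : ∀ i j, (fun y => a y i j) = fun y => a y j i :=
    fun i j => funext fun y => (hsym y).apply j i
  have hterm : ∀ i, pd (fun y => (a y *ᵥ grad φ y) i) i x
      = ∑ j, (pd (fun y => a y i j) i x * pd φ j x + a x i j * pd2 φ i j x) :=
    fun i => by
      simp only [mulVec, dotProduct, grad]
      rw [pd_sum _ fun j _ => (ha i j).fun_mul (differentiableAt_pd hφ j)]
      exact Finset.sum_congr rfl fun j _ => pd_mul (ha i j) (differentiableAt_pd hφ j) i
  simp only [divergence, hterm, Finset.sum_add_distrib, matrixDivergence, dotProduct,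
    Finset.sum_mul, trace, diag, mul_apply, hess, of_apply, grad]
  congr 1
  · rw [Finset.sum_comm]
    simp only [hswap]
  · rw [Finset.sum_comm]
    exact Finset.sum_congr rfl fun i _ => Finset.sum_congr rfl fun j _ => by
      rw [(hsym x).apply i j]

end Divergence

section TwistedOperator

variable {d : ℕ} {a : (Fin d → ℝ) → Matrix (Fin d) (Fin d) ℝ} {b : (Fin d → ℝ) → Fin d → ℝ}
  {φ ψ : (Fin d → ℝ) → ℝ} {x : Fin d → ℝ}

noncomputable def generator (a : (Fin d → ℝ) → Matrix (Fin d) (Fin d) ℝ)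
    (b : (Fin d → ℝ) → Fin d → ℝ) (f : (Fin d → ℝ) → ℝ) (x : Fin d → ℝ) : ℝ :=
  b x ⬝ᵥ grad f x + (1 / 2) * (a x * hess f x).trace

/-- The formal adjoint of `f ↦ B·Df + ½ tr(a D²f)`; in particular `formalAdjoint a b` is `L*`. -/
noncomputable def formalAdjoint (a : (Fin d → ℝ) → Matrix (Fin d) (Fin d) ℝ)
    (B : (Fin d → ℝ) → Fin d → ℝ) (f : (Fin d → ℝ) → ℝ) (x : Fin d → ℝ) : ℝ :=
  (fun i => -(B x i) + matrixDivergence a x i) ⬝ᵥ grad f x + (1 / 2) * (a x * hess f x).trace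
    - (-(1 / 2) * ∑ i, ∑ j, pd2 (fun y => a y i j) i j x + divergence B x) * f x

lemma driftZ_neg_log (hφ : DifferentiableAt ℝ φ x) (h0 : φ x ≠ 0) :
    driftZ a b (fun y => -Real.log (φ y)) x = betaOf a b x + (φ x)⁻¹ • (a x *ᵥ grad φ x) := by
  ext i
  simp [driftZ, grad_neg_log hφ h0, mulVec_neg, mulVec_smul, sub_eq_add_neg]

lemma divergence_driftZ_neg_log (hsym : ∀ y, (a y).IsSymm)
    (ha : ∀ i j, ContDiffAt ℝ 2 (fun y => a y i j) x)
    (hb : ∀ i, DifferentiableAt ℝ (fun y => b y i) x) (hφ : ContDiffAt ℝ 2 φ x) (h0 : φ x ≠ 0) :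
    divergence (driftZ a b (fun y => -Real.log (φ y))) x
      = -divergence b x + ∑ i, ∑ j, pd2 (fun y => a y i j) i j x
        + (φ x)⁻¹ * (matrixDivergence a x ⬝ᵥ grad φ x + (a x * hess φ x).trace)
        - (φ x ^ 2)⁻¹ * (grad φ x ⬝ᵥ (a x *ᵥ grad φ x)) := by
  have hnear : ∀ᶠ y in 𝓝 x, DifferentiableAt ℝ φ y ∧ φ y ≠ 0 :=
    (hφ.eventually (by simp)).and (hφ.continuousAt.eventually_ne h0) |>.mono
      fun y hy => ⟨hy.1.differentiableAt (by simp), hy.2⟩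
  have hφ' := hφ.differentiableAt (by simp)
  have ha' : ∀ i j, DifferentiableAt ℝ (fun y => a y i j) x :=
    fun i j => (ha i j).differentiableAt (by simp)
  have hmulVec : ∀ i, DifferentiableAt ℝ (fun y => (a y *ᵥ grad φ y) i) x :=
    fun i => show DifferentiableAt ℝ (fun y => ∑ j, a y i j * pd φ j y) x from
      DifferentiableAt.fun_sum fun j _ => (ha' i j).fun_mul (differentiableAt_pd hφ j)
  have hbeta : ∀ i, DifferentiableAt ℝ (fun y => betaOf a b y i) x :=
    fun i => (hb i).fun_neg.fun_add
      (DifferentiableAt.fun_sum fun j _ => differentiableAt_pd (ha i j) j)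
  have hcorr : ∀ i, DifferentiableAt ℝ (fun y => ((φ y)⁻¹ • (a y *ᵥ grad φ y)) i) x :=
    fun i => (hφ'.fun_inv h0).fun_mul (hmulVec i)
  rw [divergence_congr (hnear.mono fun y hy => driftZ_neg_log hy.1 hy.2),
    divergence_add hbeta hcorr, divergence_betaOf ha hb, divergence_smul (hφ'.fun_inv h0) hmulVec,
    grad_inv hφ' h0, divergence_mulVec_grad hsym ha' hφ, smul_dotProduct, smul_eq_mul]
  ring

theorem formalAdjoint_driftZ_mul (hsym : ∀ y, (a y).IsSymm)
    (ha : ∀ i j, ContDiffAt ℝ 2 (fun y => a y i j) x)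
    (hb : ∀ i, DifferentiableAt ℝ (fun y => b y i) x) (hφ : ContDiffAt ℝ 2 φ x)
    (hψ : ContDiffAt ℝ 2 ψ x) (h0 : φ x ≠ 0) :
    formalAdjoint a (driftZ a b (fun y => -Real.log (φ y))) (fun y => φ y * ψ y) x
      = φ x * generator a b ψ x - ψ x * formalAdjoint a b φ x := by
  have hφ' := hφ.differentiableAt (by simp)
  have hψ' := hψ.differentiableAt (by simp)
  have hdrift : (fun i => -(driftZ a b (fun y => -Real.log (φ y)) x i) + matrixDivergence a x i)
      = b x - (φ x)⁻¹ • (a x *ᵥ grad φ x) := by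
    ext i
    simp only [driftZ_neg_log hφ' h0, betaOf, matrixDivergence, Pi.add_apply, Pi.sub_apply,
      Pi.smul_apply, smul_eq_mul]
    ring
  have hbeta : (fun i => -(b x i) + matrixDivergence a x i) = matrixDivergence a x - b x := by
    ext i
    simp only [Pi.sub_apply]
    ring
  have hcross : grad φ x ⬝ᵥ (a x *ᵥ grad ψ x) = grad ψ x ⬝ᵥ (a x *ᵥ grad φ x) := by
    rw [dotProduct_mulVec, ← mulVec_transpose, (hsym x).eq, dotProduct_comm]
  rw [formalAdjoint, formalAdjoint, generator, hdrift, hbeta,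
    divergence_driftZ_neg_log hsym ha hb hφ h0, grad_mul hφ' hψ', hess_mul hφ hψ]
  simp only [dotProduct_add, sub_dotProduct, smul_dotProduct,
    dotProduct_smul, Matrix.mul_add, Matrix.mul_smul, trace_add, trace_smul, mul_vecMulVec,
    trace_vecMulVec, smul_eq_mul, dotProduct_comm (a x *ᵥ _), hcross]
  field_simp
  ring

end TwistedOperator

theorem stmt8_general {d : ℕ} (G : Set (Fin d → ℝ)) (hG : IsOpen G)
    (a : (Fin d → ℝ) → Matrix (Fin d) (Fin d) ℝ) (hsym : ∀ x, (a x).IsSymm)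
    (ha : ∀ i j, ContDiffOn ℝ 2 (fun y => a y i j) G)
    (b : (Fin d → ℝ) → (Fin d → ℝ)) (hb : ∀ i, ContDiffOn ℝ 1 (fun y => b y i) G)
    (lam : ℝ) (ψ φ : (Fin d → ℝ) → ℝ)
    (hψ : ContDiffOn ℝ 2 ψ G) (hφ : ContDiffOn ℝ 2 φ G)
    (hφpos : ∀ x ∈ G, 0 < φ x)
    (hψeig : ∀ x ∈ G,
      b x ⬝ᵥ grad ψ x + (1 / 2) * (a x * hess ψ x).trace = -lam * ψ x)
    (hφeig : ∀ x ∈ G,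
      betaOf a b x ⬝ᵥ grad φ x + (1 / 2) * (a x * hess φ x).trace
        - cOf a b x * φ x = -lam * φ x)
    (Φ : (Fin d → ℝ) → ℝ) (hΦ : Φ = fun x => -Real.log (φ x)) :
    ∀ x ∈ G,
      (fun i => -(driftZ a b Φ x i) + ∑ j, pd (fun y => a y i j) j x)
          ⬝ᵥ grad (fun y => φ y * ψ y) x
        + (1 / 2) * (a x * hess (fun y => φ y * ψ y) x).trace
        - (-(1 / 2) * ∑ i, ∑ j, pd2 (fun y => a y i j) i j x
            + ∑ i, pd (fun y => driftZ a b Φ y i) i x) * (φ x * ψ x)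
      = 0 := by
  intro x hx
  subst hΦ
  have hGx := hG.mem_nhds hx
  have hL : generator a b ψ x = -lam * ψ x := hψeig x hx
  have hLstar : formalAdjoint a b φ x = -lam * φ x := hφeig x hx
  change formalAdjoint a (driftZ a b fun y => -Real.log (φ y)) (fun y => φ y * ψ y) x = 0
  rw [formalAdjoint_driftZ_mul hsym (fun i j => (ha i j).contDiffAt hGx)
    (fun i => ((hb i).contDiffAt hGx).differentiableAt one_ne_zero) (hφ.contDiffAt hGx)
    (hψ.contDiffAt hGx) (hφpos x hx).ne', hL, hLstar]
  ring

/-- if `Lψ = −λψ` and `L*φ = −λφ` with `ψ, φ > 0` C² on `G`, and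
`Φ := −log φ`, then the formal adjoint `L_Z*` of the operator
`L_Z f = β·Df − Df·aDΦ + (1/2)tr[a D²f]` (computed via the usual formula for second order
operators, i.e. with drift `βZ := β − aDΦ`, adjoint drift `(βZ)*_i = −(βZ)_i + Σ_j ∂_j a_{ij}`
and zeroth order coefficient `−(1/2)Σ ∂_i∂_j a_{ij} + Σ_i ∂_i (βZ)_i`) satisfies
`L_Z*(φψ) = 0` on `G`, i.e. `φψ` is a stationary density for `L_Z` as well. -/
theorem stmt8 {d : ℕ} (G : Set (Fin d → ℝ)) (hG : IsOpen G)
    (a : (Fin d → ℝ) → Matrix (Fin d) (Fin d) ℝ) (hsym : ∀ x, (a x).IsSymm)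
    (hapos : ∀ x ∈ G, (a x).PosDef) (ha : ∀ i j, ContDiffOn ℝ 2 (fun y => a y i j) G)
    (b : (Fin d → ℝ) → (Fin d → ℝ)) (hb : ∀ i, ContDiffOn ℝ 1 (fun y => b y i) G)
    (lam : ℝ) (ψ φ : (Fin d → ℝ) → ℝ)
    (hψ : ContDiffOn ℝ 2 ψ G) (hφ : ContDiffOn ℝ 2 φ G)
    (hψpos : ∀ x ∈ G, 0 < ψ x) (hφpos : ∀ x ∈ G, 0 < φ x)
    (hψeig : ∀ x ∈ G,
      b x ⬝ᵥ grad ψ x + (1 / 2) * (a x * hess ψ x).trace = -lam * ψ x)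
    (hφeig : ∀ x ∈ G,
      betaOf a b x ⬝ᵥ grad φ x + (1 / 2) * (a x * hess φ x).trace
        - cOf a b x * φ x = -lam * φ x)
    (Φ : (Fin d → ℝ) → ℝ) (hΦ : Φ = fun x => -Real.log (φ x)) :
    ∀ x ∈ G,
      (fun i => -(driftZ a b Φ x i) + ∑ j, pd (fun y => a y i j) j x)
          ⬝ᵥ grad (fun y => φ y * ψ y) x
        + (1 / 2) * (a x * hess (fun y => φ y * ψ y) x).trace
        - (-(1 / 2) * ∑ i, ∑ j, pd2 (fun y => a y i j) i j x
            + ∑ i, pd (fun y => driftZ a b Φ y i) i x) * (φ x * ψ x)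
      = 0 :=
  stmt8_general G hG a hsym ha b hb lam ψ φ hψ hφ hφpos hψeig hφeig Φ hΦ
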